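/- arXiv:1606.03131 — 4 statements merged into one kernel-verified Lean document; each statement's English description precedes it below -/
import Mathlib

section
/- The Gauss measure m, defined by m(E) = (1/log 2) ∫_E dx/(1+x) for measurable E ⊆ (0,1), is invariant under the Gauss map α(x) = {1/x}: for every measurable set E ⊆ (0,1), m(α⁻¹(E)) = m(E). -/
/-!
The inverse branches of the Gauss map are `h_n(y) = 1/(n+1+y)`, `n ∈ ℕ`, so `α⁻¹(E) ∩ (0,1)` is
the disjoint union of the sets `h_n(E)`. Along `h_n` the density `1/(1+x)` pulls back to
`|h_n'(y)| / (1 + h_n(y)) = 1/((n+1+y)(n+2+y)) = h_n(y) - h_{n+1}(y)`,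
and these telescope to `h_0(y) = 1/(1+y)`.
-/

open MeasureTheory

/-- The Gauss map `α(x) = {1/x}`. -/
noncomputable def gaussMap (x : ℝ) : ℝ := Int.fract x⁻¹

/-- The Gauss measure `m(E) = (1/log 2) ∫_E dx/(1+x)` for `E ⊆ (0,1)`. -/
noncomputable def gaussMeasure (E : Set ℝ) : ℝ :=
  (Real.log 2)⁻¹ * ∫ x in E, (1 + x)⁻¹

open Set Filter Topology Function

theorem hasSum_sub_succ_of_antitone {f : ℕ → ℝ} {l : ℝ} (hf : Antitone f)
    (hl : Tendsto f atTop (𝓝 l)) : HasSum (fun n => f n - f (n + 1)) (f 0 - l) := by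
  refine (hasSum_iff_tendsto_nat_of_nonneg (fun n => sub_nonneg.2 (hf n.le_succ)) _).2 ?_
  simpa only [Finset.sum_range_sub'] using hl.const_sub (f 0)

theorem integrableOn_inv_one_add {s : Set ℝ} (hs : s ⊆ Icc 0 1) :
    IntegrableOn (fun x : ℝ => (1 + x)⁻¹) s := by
  have hcont : ContinuousOn (fun x : ℝ => (1 + x)⁻¹) (Icc 0 1) :=
    ContinuousOn.inv₀ (by fun_prop) fun x hx => (add_pos_of_pos_of_nonneg one_pos hx.1).ne'
  exact hcont.integrableOn_Icc.mono_set hs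

noncomputable def gaussBranch (n : ℕ) (y : ℝ) : ℝ := ((n : ℝ) + 1 + y)⁻¹

theorem gaussBranch_injective (n : ℕ) : Injective (gaussBranch n) :=
  fun _ _ h => add_left_cancel (inv_injective h)

@[fun_prop]
theorem measurable_gaussBranch (n : ℕ) : Measurable (gaussBranch n) := by
  unfold gaussBranch; fun_prop

theorem hasDerivAt_gaussBranch (n : ℕ) {y : ℝ} (hy : (n : ℝ) + 1 + y ≠ 0) :
    HasDerivAt (gaussBranch n) (-(((n : ℝ) + 1 + y) ^ 2)⁻¹) y := by
  have := (hasDerivAt_inv hy).comp y ((hasDerivAt_id' y).const_add _)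
  rwa [mul_one] at this

theorem gaussBranch_mem_Ioo (n : ℕ) {y : ℝ} (hy : 0 < y) : gaussBranch n y ∈ Ioo 0 1 :=
  ⟨by unfold gaussBranch; positivity,
    inv_lt_one_of_one_lt₀ (by linarith [(n.cast_nonneg : (0 : ℝ) ≤ n)])⟩

theorem inv_gaussBranch_eq (n : ℕ) (y : ℝ) : (gaussBranch n y)⁻¹ = ((n + 1 : ℕ) : ℝ) + y := by
  rw [gaussBranch, inv_inv, Nat.cast_succ]

theorem floor_inv_gaussBranch (n : ℕ) {y : ℝ} (hy : y ∈ Ico 0 1) :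
    ⌊(gaussBranch n y)⁻¹⌋ = n + 1 := by
  rw [inv_gaussBranch_eq, Int.floor_natCast_add, Int.floor_eq_zero_iff.2 hy]
  push_cast; ring

theorem gaussMap_gaussBranch (n : ℕ) {y : ℝ} (hy : y ∈ Ico 0 1) :
    gaussMap (gaussBranch n y) = y := by
  rw [gaussMap, inv_gaussBranch_eq, Int.fract_natCast_add, Int.fract_eq_self.2 hy]

theorem exists_gaussBranch_gaussMap_eq {x : ℝ} (hx : x ∈ Ioo 0 1) :
    ∃ n, gaussBranch n (gaussMap x) = x := by
  have hfloor : 1 ≤ ⌊x⁻¹⌋ := Int.le_floor.2 (by exact_mod_cast (one_lt_inv₀ hx.1).2 hx.2 |>.le)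
  obtain ⟨n, hn⟩ := Int.eq_ofNat_of_zero_le (sub_nonneg.2 hfloor)
  refine ⟨n, inv_eq_iff_eq_inv.2 ?_⟩
  have hn' : (n : ℝ) + 1 = ⌊x⁻¹⌋ := by rw [← Int.cast_natCast, ← hn]; push_cast; ring
  rw [gaussMap, hn', Int.floor_add_fract]

theorem preimage_gaussMap_inter_Ioo {E : Set ℝ} (hE : E ⊆ Ioo 0 1) :
    gaussMap ⁻¹' E ∩ Ioo 0 1 = ⋃ n, gaussBranch n '' E := by
  ext x
  simp only [mem_inter_iff, mem_preimage, mem_iUnion, mem_image]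
  constructor
  · rintro ⟨hxE, hx⟩
    obtain ⟨n, hn⟩ := exists_gaussBranch_gaussMap_eq hx
    exact ⟨n, gaussMap x, hxE, hn⟩
  · rintro ⟨n, y, hy, rfl⟩
    rw [gaussMap_gaussBranch n (Ioo_subset_Ico_self (hE hy))]
    exact ⟨hy, gaussBranch_mem_Ioo n (hE hy).1⟩

theorem pairwise_disjoint_gaussBranch_image {E : Set ℝ} (hE : E ⊆ Ico 0 1) :
    Pairwise (Disjoint on fun n => gaussBranch n '' E) := by
  intro m n hmn
  refine disjoint_left.2 ?_
  rintro _ ⟨y, hy, rfl⟩ ⟨z, hz, hzy⟩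
  have := congrArg (fun x => ⌊x⁻¹⌋) hzy
  simp only [floor_inv_gaussBranch _ (hE hy), floor_inv_gaussBranch _ (hE hz)] at this
  exact hmn (by exact_mod_cast (add_right_cancel this).symm)

theorem gaussBranch_sub_gaussBranch_succ (n : ℕ) {y : ℝ} (hy : 0 ≤ y) :
    gaussBranch n y - gaussBranch (n + 1) y =
      (((n : ℝ) + 1 + y) ^ 2)⁻¹ * (1 + gaussBranch n y)⁻¹ := by
  have : 0 < (n : ℝ) + 1 + y := by positivity
  rw [gaussBranch, gaussBranch]
  push_cast
  field_simp
  ring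

theorem setIntegral_gaussBranch_image {E : Set ℝ} (hE : MeasurableSet E) (hE0 : E ⊆ Ici 0)
    (n : ℕ) :
    ∫ x in gaussBranch n '' E, (1 + x)⁻¹ = ∫ y in E, (gaussBranch n y - gaussBranch (n + 1) y) := by
  have hpos (y) (hy : y ∈ E) : 0 < (n : ℝ) + 1 + y := by
    have : (0 : ℝ) ≤ y := hE0 hy
    positivity
  rw [integral_image_eq_integral_abs_deriv_smul hE
    (fun y hy => (hasDerivAt_gaussBranch n (hpos y hy).ne').hasDerivWithinAt)
    (gaussBranch_injective n).injOn]
  refine setIntegral_congr_fun hE fun y hy => ?_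
  rw [abs_neg, abs_of_pos (inv_pos.2 (pow_pos (hpos y hy) 2)), smul_eq_mul,
    gaussBranch_sub_gaussBranch_succ n (hE0 hy)]

theorem antitone_gaussBranch {y : ℝ} (hy : 0 ≤ y) : Antitone fun n => gaussBranch n y :=
  fun m n hmn => by
    dsimp only [gaussBranch]
    gcongr

theorem hasSum_gaussBranch_sub_succ {y : ℝ} (hy : 0 ≤ y) :
    HasSum (fun n => gaussBranch n y - gaussBranch (n + 1) y) (1 + y)⁻¹ := by
  have hlim : Tendsto (fun n => gaussBranch n y) atTop (𝓝 0) :=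
    tendsto_inv_atTop_zero.comp <| tendsto_atTop_add_const_right _ y <|
      tendsto_atTop_add_const_right _ 1 tendsto_natCast_atTop_atTop
  simpa [gaussBranch] using hasSum_sub_succ_of_antitone (antitone_gaussBranch hy) hlim

theorem hasSum_setIntegral_gaussBranch_sub_succ {E : Set ℝ} (hE : MeasurableSet E) (hE0 : E ⊆ Ici 0)
    (hint : IntegrableOn (fun y : ℝ => (1 + y)⁻¹) E) :
    HasSum (fun n => ∫ y in E, (gaussBranch n y - gaussBranch (n + 1) y))
      (∫ y in E, (1 + y)⁻¹) := by
  have hsum : ∀ᵐ y ∂volume.restrict E,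
      HasSum (fun n => gaussBranch n y - gaussBranch (n + 1) y) (1 + y)⁻¹ :=
    ae_restrict_of_forall_mem hE fun y hy => hasSum_gaussBranch_sub_succ (hE0 hy)
  refine hasSum_integral_of_dominated_convergence
    (fun n y => gaussBranch n y - gaussBranch (n + 1) y) (fun n => by fun_prop) (fun n => ?_)
    (hsum.mono fun y hy => hy.summable)
    (hint.congr_fun_ae (hsum.mono fun y hy => hy.tsum_eq.symm)) hsum
  exact ae_restrict_of_forall_mem hE fun y hy =>
    (Real.norm_of_nonneg (sub_nonneg.2 (antitone_gaussBranch (hE0 hy) n.le_succ))).le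

/-- The Gauss measure is invariant under the Gauss map: for every measurable
`E ⊆ (0,1)`, `m(α⁻¹(E)) = m(E)` (preimage taken within `(0,1)`). -/
theorem gaussMeasure_invariant (E : Set ℝ) (hE : MeasurableSet E)
    (hE1 : E ⊆ Set.Ioo (0:ℝ) 1) :
    gaussMeasure (gaussMap ⁻¹' E ∩ Set.Ioo (0:ℝ) 1) = gaussMeasure E := by
  unfold gaussMeasure
  congr 1
  have hint : IntegrableOn (fun x : ℝ => (1 + x)⁻¹) (gaussMap ⁻¹' E ∩ Ioo 0 1) :=
    integrableOn_inv_one_add (inter_subset_right.trans Ioo_subset_Icc_self)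
  have hE0 : E ⊆ Ici 0 := hE1.trans (Ioo_subset_Ioi_self.trans Ioi_subset_Ici_self)
  have hpieces := hasSum_integral_iUnion
    (fun n => hE.image_of_measurable_injOn (measurable_gaussBranch n)
      (gaussBranch_injective n).injOn)
    (pairwise_disjoint_gaussBranch_image (hE1.trans Ioo_subset_Ico_self))
    (preimage_gaussMap_inter_Ioo hE1 ▸ hint)
  rw [preimage_gaussMap_inter_Ioo hE1]
  refine hpieces.unique ?_
  simpa only [setIntegral_gaussBranch_image hE hE0] using
    hasSum_setIntegral_gaussBranch_sub_succ hE hE0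
      (integrableOn_inv_one_add (hE1.trans Ioo_subset_Icc_self))
end

section
/- A number x ∈ (0,1)\ℚ is a Wilton number if and only if α(x) = {1/x} is a Wilton number, and in that case W(x) = log(1/x) − x·W(α(x)). -/
open Filter

/-- Iterates of the Gauss map. -/
noncomputable def gaussIter (k : ℕ) (x : ℝ) : ℝ := gaussMap^[k] x

/-- `β_{k-1}(x) = α_0(x) ⋯ α_{k-1}(x)` (so `betaProd 0 x = β_{-1}(x) = 1`). -/
noncomputable def betaProd (k : ℕ) (x : ℝ) : ℝ :=
  ∏ i ∈ Finset.range k, gaussIter i x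

/-- `γ_k(x) = β_{k-1}(x) log(1/α_k(x))`. -/
noncomputable def gammaFn (k : ℕ) (x : ℝ) : ℝ :=
  betaProd k x * Real.log (1 / gaussIter k x)

/-- `x` is a Wilton number if `Σ_{k≥0} (-1)^k γ_k(x)` converges. -/
def IsWilton (x : ℝ) : Prop :=
  ∃ W : ℝ, Tendsto (fun N => ∑ k ∈ Finset.range N, (-1 : ℝ) ^ k * gammaFn k x)
    atTop (nhds W)

open Topology

/-! Peeling off the first term of the series: since `γ_{k+1}(x) = x γ_k(α(x))`, the partial sums
satisfy `S_{N+1}(x) = log(1/x) - x S_N(α(x))`. For `x ≠ 0` the map `t ↦ log(1/x) - x t` is a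
homeomorphism of `ℝ`, so one sequence of partial sums converges iff the other does. -/

noncomputable def wiltonSum (x : ℝ) (N : ℕ) : ℝ :=
  ∑ k ∈ Finset.range N, (-1 : ℝ) ^ k * gammaFn k x

lemma gaussIter_succ (k : ℕ) (x : ℝ) : gaussIter (k + 1) x = gaussIter k (gaussMap x) :=
  Function.iterate_succ_apply gaussMap k x

lemma betaProd_succ (k : ℕ) (x : ℝ) : betaProd (k + 1) x = x * betaProd k (gaussMap x) := by
  simp only [betaProd, Finset.prod_range_succ', gaussIter_succ]
  exact mul_comm _ _

lemma gammaFn_zero (x : ℝ) : gammaFn 0 x = Real.log (1 / x) := by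
  simp [gammaFn, betaProd, gaussIter]

lemma gammaFn_succ (k : ℕ) (x : ℝ) : gammaFn (k + 1) x = x * gammaFn k (gaussMap x) := by
  rw [gammaFn, gammaFn, betaProd_succ, gaussIter_succ, mul_assoc]

lemma wiltonSum_succ (x : ℝ) (N : ℕ) :
    wiltonSum x (N + 1) = Real.log (1 / x) - x * wiltonSum (gaussMap x) N := by
  simp only [wiltonSum, Finset.sum_range_succ', gammaFn_succ, gammaFn_zero, pow_zero, one_mul,
    Finset.mul_sum, sub_eq_add_neg, ← Finset.sum_neg_distrib]
  rw [add_comm]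
  congr 1
  exact Finset.sum_congr rfl fun k _ => by ring

lemma tendsto_iff_of_succ_eq_const_sub_mul {S T : ℕ → ℝ} {a c : ℝ} (ha : a ≠ 0)
    (h : ∀ N, S (N + 1) = c - a * T N) (w : ℝ) :
    Tendsto S atTop (𝓝 (c - a * w)) ↔ Tendsto T atTop (𝓝 w) := by
  rw [← tendsto_add_atTop_iff_nat 1, funext h, tendsto_const_sub_iff]
  exact tendsto_const_smul_iff₀ ha

theorem isWilton_iff_gaussMap_general (x : ℝ) (hx : x ∈ Set.Ioo (0:ℝ) 1) :
    (IsWilton x ↔ IsWilton (gaussMap x)) ∧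
    ∀ W W' : ℝ,
      Tendsto (fun N => ∑ k ∈ Finset.range N, (-1 : ℝ) ^ k * gammaFn k x) atTop (nhds W) →
      Tendsto (fun N => ∑ k ∈ Finset.range N, (-1 : ℝ) ^ k * gammaFn k (gaussMap x)) atTop (nhds W') →
      W = Real.log (1 / x) - x * W' := by
  have hx0 : x ≠ 0 := hx.1.ne'
  have key := tendsto_iff_of_succ_eq_const_sub_mul hx0 (wiltonSum_succ x)
  refine ⟨⟨fun ⟨W, hW⟩ => ?_, fun ⟨W', hW'⟩ => ⟨_, (key W').2 hW'⟩⟩,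
    fun W W' hW hW' => tendsto_nhds_unique hW ((key W').2 hW')⟩
  have hW_eq : W = Real.log (1 / x) - x * ((Real.log (1 / x) - W) / x) := by
    field_simp
    ring
  exact ⟨_, (key _).1 (hW_eq ▸ hW)⟩

/-- `x` is Wilton iff `α(x)` is Wilton, and then `W(x) = log(1/x) - x·W(α(x))`. -/
theorem isWilton_iff_gaussMap (x : ℝ) (hx : x ∈ Set.Ioo (0:ℝ) 1) (hirr : Irrational x) :
    (IsWilton x ↔ IsWilton (gaussMap x)) ∧
    ∀ W W' : ℝ,
      Tendsto (fun N => ∑ k ∈ Finset.range N, (-1 : ℝ) ^ k * gammaFn k x) atTop (nhds W) →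
      Tendsto (fun N => ∑ k ∈ Finset.range N, (-1 : ℝ) ^ k * gammaFn k (gaussMap x)) atTop (nhds W') →
      W = Real.log (1 / x) - x * W' :=
  isWilton_iff_gaussMap_general x hx
end

section
/- There exists a constant C > 0 such that for all L ∈ ℕ, ∫_{x_0}^1 (log(1/x))^L dx = O(Γ(L+1) exp(−C L)), where x_0 = exp(−⌊L/100⌋). -/
/-!
On `(exp (-M), 1)` the integrand `log (1 / x) ^ L` lies in `[0, M ^ L]` and the interval has length
at most `1`, so the integral is at most `M ^ L ≤ (L / 100) ^ L`. Since `L ^ L ≤ L! · e ^ L` and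
`e ^ 4 < 100`, this is at most `L! · (e / 100) ^ L ≤ Γ(L + 1) · e ^ (-3L)`.
-/

open MeasureTheory Nat Real Set

theorem abs_setIntegral_log_one_div_pow_le {M : ℝ} (hM : 0 ≤ M) (n : ℕ) :
    |∫ x in Ioo (exp (-M)) 1, log (1 / x) ^ n| ≤ M ^ n := by
  have h_bound : ∀ x ∈ Ioo (exp (-M)) 1, ‖log (1 / x) ^ n‖ ≤ M ^ n := by
    rintro x ⟨hx_lo, hx_hi⟩
    have hx : 0 < x := (exp_pos _).trans hx_lo
    have h_nonneg : 0 ≤ log (1 / x) := log_nonneg ((one_le_div hx).2 hx_hi.le)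
    have h_le : log (1 / x) ≤ M := by
      rw [one_div, log_inv, neg_le]
      exact ((lt_log_iff_exp_lt hx).2 hx_lo).le
    rw [norm_pow, norm_of_nonneg h_nonneg]
    exact pow_le_pow_left₀ h_nonneg h_le n
  have h_vol : volume.real (Ioo (exp (-M)) 1) ≤ 1 := by
    rw [volume_real_Ioo_of_le (exp_le_one_iff.2 (neg_nonpos.2 hM))]
    linarith [exp_pos (-M)]
  calc |∫ x in Ioo (exp (-M)) 1, log (1 / x) ^ n|
      ≤ M ^ n * volume.real (Ioo (exp (-M)) 1) :=
        norm_setIntegral_le_of_norm_le_const measure_Ioo_lt_top h_bound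
    _ ≤ M ^ n := mul_le_of_le_one_right (by positivity) h_vol

theorem mul_natCast_pow_le_factorial_mul {t : ℝ} (ht : 0 ≤ t) (n : ℕ) :
    (t * n) ^ n ≤ n ! * (t * exp 1) ^ n := by
  have h_pow : (n : ℝ) ^ n ≤ n ! * exp n := by
    have := pow_div_factorial_le_exp (n : ℝ) (Nat.cast_nonneg n) n
    rwa [div_le_iff₀' (by positivity)] at this
  calc (t * n) ^ n = t ^ n * (n : ℝ) ^ n := mul_pow t _ n
    _ ≤ t ^ n * (n ! * exp n) := by gcongr
    _ = n ! * (t * exp 1) ^ n := by rw [mul_pow, ← exp_nat_mul, mul_one]; ring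

theorem div_hundred_pow_le_factorial_mul_exp (n : ℕ) :
    ((n : ℝ) / 100) ^ n ≤ n ! * exp (-3 * n) := by
  have h_base : 1 / 100 * exp 1 ≤ exp (-3) := by
    have h_exp : exp 1 = exp 4 * exp (-3) := by rw [← exp_add]; norm_num
    rw [h_exp]
    nlinarith [Behrend.exp_four_lt, exp_pos (-3)]
  calc ((n : ℝ) / 100) ^ n = (1 / 100 * n) ^ n := by ring
    _ ≤ n ! * (1 / 100 * exp 1) ^ n := mul_natCast_pow_le_factorial_mul (by norm_num) n
    _ ≤ n ! * exp (-3) ^ n := by gcongr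
    _ = n ! * exp (-3 * n) := by rw [← exp_nat_mul, mul_comm (n : ℝ)]

/-- There are constants `C > 0` and `c` such that for all `L ∈ ℕ`,
`∫_{x₀}^1 (log(1/x))^L dx ≤ c · Γ(L+1) exp(-C L)` where `x₀ = exp(-⌊L/100⌋)`. -/
theorem integral_log_pow_tail :
    ∃ C > (0:ℝ), ∃ c > (0:ℝ), ∀ L : ℕ,
      |∫ x in Set.Ioo (Real.exp (-((L / 100 : ℕ) : ℝ))) 1, (Real.log (1 / x)) ^ L| ≤
        c * (Real.Gamma (L + 1) * Real.exp (-C * L)) := by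
  refine ⟨3, by norm_num, 1, by norm_num, fun L => ?_⟩
  have h_floor : ((L / 100 : ℕ) : ℝ) ≤ (L : ℝ) / 100 := Nat.cast_div_le
  calc |∫ x in Ioo (exp (-((L / 100 : ℕ) : ℝ))) 1, log (1 / x) ^ L|
      ≤ ((L / 100 : ℕ) : ℝ) ^ L := abs_setIntegral_log_one_div_pow_le (Nat.cast_nonneg _) L
    _ ≤ ((L : ℝ) / 100) ^ L := by gcongr
    _ ≤ L ! * exp (-3 * L) := div_hundred_pow_le_factorial_mul_exp L
    _ = 1 * (Gamma (L + 1) * exp (-3 * L)) := by rw [Gamma_nat_eq_factorial, one_mul]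
end

section
/- A(1) = ∫_0^∞ {t}²/t² dt = log(2π) − γ, where γ is the Euler–Mascheroni constant. -/
open MeasureTheory Real Filter Set Topology

/-!
On `[n, n + 1]` the integrand is `(t - n)² / t²`, with antiderivative `t - 2n log t - n² / t`,
so that piece contributes `2 - 1 / (n + 1) - 2n log ((n + 1) / n)`. Adding the pieces,
`∫₀ᴺ = 2N - H_N - 2N log N + 2 log N!`, and Stirling's formula
`log N! = N log N - N + ½ log (2πN) + o(1)` turns this into `log (2π) - (H_N - log N) + o(1)`,
which tends to `log (2π) - γ`.
-/

lemma Int.fract_le_self {R : Type*} [Ring R] [LinearOrder R] [IsStrictOrderedRing R] [FloorRing R]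
    {a : R} (ha : 0 ≤ a) : Int.fract a ≤ a := by
  rw [Int.fract, sub_le_self_iff]
  exact_mod_cast Int.floor_nonneg.mpr ha

section FloorField

variable {K : Type*} [Field K] [LinearOrder K] [IsStrictOrderedRing K] [FloorRing K]

lemma fract_sq_div_sq_le_one {a : K} (ha : 0 ≤ a) : Int.fract a ^ 2 / a ^ 2 ≤ 1 :=
  div_le_one_of_le₀ (pow_le_pow_left₀ (Int.fract_nonneg a) (Int.fract_le_self ha) 2) (sq_nonneg a)

lemma fract_sq_div_sq_le_inv_sq (a : K) : Int.fract a ^ 2 / a ^ 2 ≤ (a ^ 2)⁻¹ := by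
  rw [div_eq_mul_inv]
  exact mul_le_of_le_one_left (by positivity)
    (pow_le_one₀ (Int.fract_nonneg a) (Int.fract_lt_one a).le)

end FloorField

lemma integrableOn_fract_sq_div_sq :
    IntegrableOn (fun t : ℝ ↦ Int.fract t ^ 2 / t ^ 2) (Ioi 0) := by
  have hmeas : AEStronglyMeasurable (fun t : ℝ ↦ Int.fract t ^ 2 / t ^ 2) :=
    ((measurable_fract.pow_const 2).div (measurable_id.pow_const 2)).aestronglyMeasurable
  have hinv_sq : IntegrableOn (fun t : ℝ ↦ (t ^ 2)⁻¹) (Ioi 1) :=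
    (integrableOn_Ioi_rpow_of_lt (by norm_num : (-2 : ℝ) < -1) one_pos).congr_fun
      (fun t ht ↦ by dsimp only; rw [rpow_neg (zero_lt_one.trans ht).le, rpow_two])
      measurableSet_Ioi
  rw [← Ioc_union_Ioi_eq_Ioi zero_le_one]
  refine .union (.of_bound measure_Ioc_lt_top hmeas.restrict 1 ?_)
    (hinv_sq.mono' hmeas.restrict ?_)
  · filter_upwards [ae_restrict_mem measurableSet_Ioc] with t ht
    rw [norm_of_nonneg (by positivity)]
    exact fract_sq_div_sq_le_one ht.1.le
  · filter_upwards with t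
    rw [norm_of_nonneg (by positivity)]
    exact fract_sq_div_sq_le_inv_sq t

lemma intervalIntegrable_fract_sq_div_sq {a b : ℝ} (ha : 0 ≤ a) (hb : 0 ≤ b) :
    IntervalIntegrable (fun t : ℝ ↦ Int.fract t ^ 2 / t ^ 2) volume a b :=
  intervalIntegrable_iff.mpr <| integrableOn_fract_sq_div_sq.mono_set fun _ ht ↦
    (le_min ha hb).trans_lt ht.1

lemma integral_fract_sq_div_sq_natCast_succ (n : ℕ) :
    ∫ t in (n : ℝ)..n + 1, Int.fract t ^ 2 / t ^ 2 =
      2 - ((n : ℝ) + 1)⁻¹ - 2 * n * (log (n + 1) - log n) := by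
  set F : ℝ → ℝ := fun t ↦ t - 2 * n * log t - n ^ 2 / t
  have hle : (n : ℝ) ≤ n + 1 := by linarith
  have hcont : ContinuousOn F (Icc n (n + 1)) := by
    rcases Nat.eq_zero_or_pos n with rfl | hn
    · simpa [F] using continuousOn_id' _
    · have hne : ∀ t ∈ Icc (n : ℝ) (n + 1), t ≠ 0 := fun t ht ↦
        ((Nat.cast_pos.mpr hn).trans_le ht.1).ne'
      exact (continuousOn_id.sub (continuousOn_const.mul (continuousOn_log.mono hne))).sub
        (continuousOn_const.div continuousOn_id hne)
  have hderiv : ∀ t ∈ Ioo (n : ℝ) (n + 1), HasDerivAt F (Int.fract t ^ 2 / t ^ 2) t := by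
    intro t ht
    have ht0 : t ≠ 0 := ((Nat.cast_nonneg n).trans_lt ht.1).ne'
    have hfract : Int.fract t = t - n :=
      Int.fract_eq_iff.mpr ⟨by linarith [ht.1], by linarith [ht.2], n, by simp⟩
    refine (((hasDerivAt_id t).sub ((hasDerivAt_log ht0).const_mul (2 * n : ℝ))).sub
      ((hasDerivAt_const t ((n : ℝ) ^ 2)).div (hasDerivAt_id t) ht0)).congr_deriv ?_
    simp only [id, hfract]
    field_simp
    ring
  rw [intervalIntegral.integral_eq_sub_of_hasDerivAt_of_le hle hcont hderiv
    (intervalIntegrable_fract_sq_div_sq n.cast_nonneg (by positivity))]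
  simp only [F]
  field_simp
  ring

lemma integral_fract_sq_div_sq_zero_natCast (N : ℕ) :
    ∫ t in (0 : ℝ)..N, Int.fract t ^ 2 / t ^ 2 =
      2 * N - harmonic N - 2 * N * log N + 2 * log N.factorial := by
  induction N with
  | zero => simp
  | succ N ih =>
    have hN : (0 : ℝ) ≤ N := N.cast_nonneg
    rw [← intervalIntegral.integral_add_adjacent_intervals (b := (N : ℝ))
      (intervalIntegrable_fract_sq_div_sq le_rfl hN)
      (intervalIntegrable_fract_sq_div_sq hN (by positivity)), ih, Nat.cast_succ,
      integral_fract_sq_div_sq_natCast_succ, harmonic_succ, Nat.factorial_succ, Nat.cast_mul,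
      log_mul (by positivity) (by positivity)]
    push_cast
    ring

lemma tendsto_integral_fract_sq_div_sq_zero_natCast :
    Tendsto (fun N : ℕ ↦ ∫ t in (0 : ℝ)..N, Int.fract t ^ 2 / t ^ 2) atTop
      (𝓝 (log (2 * π) - eulerMascheroniConstant)) := by
  have hstirling : Tendsto (fun N : ℕ ↦ log (Stirling.stirlingSeq N)) atTop (𝓝 (log √π)) :=
    ((continuousAt_log (by positivity)).tendsto).comp Stirling.tendsto_stirlingSeq_sqrt_pi
  have hlim : log (2 * π) = 2 * log √π + log 2 := by
    rw [log_sqrt pi_pos.le, log_mul two_ne_zero pi_ne_zero]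
    ring
  rw [hlim]
  refine (((hstirling.const_mul 2).add_const (log 2)).sub tendsto_harmonic_sub_log).congr' ?_
  filter_upwards [eventually_ne_atTop 0] with N hN
  have hN : (N : ℝ) ≠ 0 := Nat.cast_ne_zero.mpr hN
  rw [integral_fract_sq_div_sq_zero_natCast, Stirling.log_stirlingSeq_formula,
    log_mul two_ne_zero hN, log_div hN (exp_ne_zero 1), log_exp]
  ring

/-- `A(1) = ∫_0^∞ {t}²/t² dt = log(2π) - γ`. -/
theorem integral_fract_sq_div_sq :
    ∫ t in Set.Ioi (0:ℝ), Int.fract t ^ 2 / t ^ 2 =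
      Real.log (2 * Real.pi) - Real.eulerMascheroniConstant :=
  tendsto_nhds_unique
    (intervalIntegral_tendsto_integral_Ioi 0 integrableOn_fract_sq_div_sq
      tendsto_natCast_atTop_atTop)
    tendsto_integral_fract_sq_div_sq_zero_natCast
end
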